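/- arXiv:2510.22796 — 4 statements merged into one kernel-verified Lean document; each statement's English description precedes it below -/
import Mathlib

section
/- Let p ≥ 1 be an integer and let u, d be formal power series in two variables x, y over ℝ such that the coefficient of x^0 y^j in u is 0 for every 0 ≤ j ≤ p, the coefficient of x^0 y^j in d is 0 for every 0 ≤ j ≤ p, and the coefficient of x^1 y^0 in d is 1. Then there exists a unique polynomial η in x, y over ℝ of total degree strictly less than p such that every coefficient of the power series u − d·η of total degree at most p vanishes. -/
/-!
Since `u` and `d` vanish on the `y`-axis up to degree `p`, we can write `u ≡ x v` and
`d ≡ x e` modulo series of order `> p`, where `e` has constant coefficient `d₁₀ = 1` and is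
therefore invertible. Then `u - d η ≡ x (v - e η) = x e (e⁻¹ v - η)`, so the condition on `η`
says exactly that `e⁻¹ v - η` has order `≥ p`: the polynomial `η` must be the truncation of
`e⁻¹ v` below total degree `p`.
-/

/-- The exponent `(i, j)` of the monomial `x^i y^j`, as a finitely supported
function on `Fin 2`. -/
noncomputable def expPair (i j : ℕ) : Fin 2 →₀ ℕ := Finsupp.equivFunOnFinite.symm ![i, j]

namespace MvPowerSeries

variable {σ R : Type*}

section Semiring

variable [Semiring R]

theorem nat_le_order_iff {f : MvPowerSeries σ R} {n : ℕ} :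
    (n : ℕ∞) ≤ f.order ↔ ∀ m, m.degree < n → coeff m f = 0 :=
  ⟨fun h _ hm => coeff_of_lt_order (lt_of_lt_of_le (by exact_mod_cast hm) h), nat_le_order⟩

theorem order_mul_of_isUnit {a f : MvPowerSeries σ R} (ha : IsUnit a) :
    (a * f).order = f.order := by
  obtain ⟨b, hb⟩ := ha.exists_left_inv
  refine le_antisymm ?_ (le_add_self.trans le_order_mul)
  calc (a * f).order ≤ b.order + (a * f).order := le_add_self
    _ ≤ (b * (a * f)).order := le_order_mul
    _ = f.order := by rw [← mul_assoc, hb, one_mul]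

theorem order_X_mul [Nontrivial R] (s : σ) (f : MvPowerSeries σ R) :
    (X s * f).order = f.order + 1 := by
  have hX : (X s : MvPowerSeries σ R).order = 1 := by
    rw [X, order_monomial_of_ne_zero one_ne_zero, Finsupp.degree_single, Nat.cast_one]
  refine le_antisymm ?_ (by simpa [hX, add_comm] using le_order_mul (f := X s) (g := f))
  rcases eq_or_ne f 0 with rfl | hf
  · simp
  obtain ⟨m, hm, hdeg⟩ := exists_coeff_ne_zero_and_order (ne_zero_iff_order_finite.mp hf)
  have hcoeff : coeff (Finsupp.single s 1 + m) (X s * f) ≠ 0 := by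
    rwa [X, coeff_add_monomial_mul, one_mul]
  calc (X s * f).order ≤ (Finsupp.single s 1 + m).degree := order_le hcoeff
    _ = f.order + 1 := by rw [map_add, Finsupp.degree_single, ← hdeg]; push_cast; ring

end Semiring

section Ring

variable [Ring R]

theorem le_order_add_iff_of_le_order {f g : MvPowerSeries σ R} {n : ℕ∞} (hg : n ≤ g.order) :
    n ≤ (f + g).order ↔ n ≤ f.order := by
  refine ⟨fun h => ?_, fun h => (le_min h hg).trans min_order_le_add⟩
  have := (le_min h (hg.trans_eq (order_neg g).symm)).trans (min_order_le_add (f := f + g))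
  rwa [add_neg_cancel_right] at this

theorem exists_le_order_sub_X_mul {f : MvPowerSeries σ R} {s : σ} {n : ℕ}
    (hf : ∀ m, m s = 0 → m.degree < n → coeff m f = 0) :
    ∃ g, (n : ℕ∞) ≤ (f - X s * g).order := by
  classical
  let g : MvPowerSeries σ R := fun m => coeff (m + Finsupp.single s 1) f
  refine ⟨g, nat_le_order fun m hm => ?_⟩
  rw [map_sub, X, coeff_monomial_mul, one_mul]
  split_ifs with hsm
  · show coeff m f - coeff (m - _ + _) f = 0
    rw [tsub_add_cancel_of_le hsm, sub_self]
  · rw [sub_zero]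
    refine hf m ?_ hm
    simpa [Finsupp.single_le_iff, Nat.one_le_iff_ne_zero] using hsm

theorem constantCoeff_eq_of_two_le_order_sub_X_mul {d e : MvPowerSeries σ R} {s : σ}
    (h : 2 ≤ (d - X s * e).order) : constantCoeff e = coeff (Finsupp.single s 1) d := by
  have hcoeff := coeff_of_lt_order (d := Finsupp.single s 1) (lt_of_lt_of_le (by simp) h)
  rwa [map_sub, X, coeff_monomial_mul, if_pos le_rfl, one_mul, tsub_self,
    coeff_zero_eq_constantCoeff_apply, sub_eq_zero, eq_comm] at hcoeff

end Ring

theorem totalDegree_lt_and_le_order_sub_iff [CommRing R] [Finite σ] {n : ℕ} (hn : n ≠ 0)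
    {f : MvPowerSeries σ R} {η : MvPolynomial σ R} :
    η.totalDegree < n ∧ n ≤ (f - (η : MvPowerSeries σ R)).order ↔ η = truncTotal n f := by
  constructor
  · rintro ⟨hdeg, hord⟩
    have hdiff : truncTotal n (f - (η : MvPowerSeries σ R)) = 0 := by
      ext m
      rw [coeff_truncTotal_eq_ite, MvPolynomial.coeff_zero]
      split_ifs with hm
      exacts [nat_le_order_iff.mp hord m hm, rfl]
    rw [map_sub, sub_eq_zero, (truncTotal_coe_eq_self_iff η hn).mpr hdeg] at hdiff
    exact hdiff.symm
  · rintro rfl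
    refine ⟨totalDegree_truncTotal_lt f hn, nat_le_order fun m hm => ?_⟩
    rw [map_sub, MvPolynomial.coeff_coe, coeff_truncTotal f hm, sub_self]

theorem le_order_sub_mul_iff {k : Type*} [Field k] {u d v e w : MvPowerSeries σ k} {n : ℕ∞}
    {s : σ} (hv : n + 1 ≤ (u - X s * v).order) (he : n + 1 ≤ (d - X s * e).order)
    (he0 : constantCoeff e ≠ 0) :
    n + 1 ≤ (u - d * w).order ↔ n ≤ (e⁻¹ * v - w).order := by
  have hdw : n + 1 ≤ (-((d - X s * e) * w)).order :=
    he.trans (le_self_add.trans le_order_mul) |>.trans_eq (order_neg _).symm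
  have hunit : IsUnit e := isUnit_iff_constantCoeff.mpr he0.isUnit
  have hsplit :
      u - d * w = X s * (e * (e⁻¹ * v - w)) + -((d - X s * e) * w) + (u - X s * v) := by
    rw [mul_sub e, ← mul_assoc, MvPowerSeries.mul_inv_cancel e he0, one_mul]
    ring
  rw [hsplit, le_order_add_iff_of_le_order hv, le_order_add_iff_of_le_order hdw, order_X_mul,
    order_mul_of_isUnit hunit, ENat.add_le_add_iff_right ENat.one_ne_top]

end MvPowerSeries

open MvPowerSeries

theorem degree_expPair (i j : ℕ) : (expPair i j).degree = i + j := by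
  simp [Finsupp.degree_eq_sum, Fin.sum_univ_two, expPair]

theorem expPair_apply_zero_apply_one (m : Fin 2 →₀ ℕ) : expPair (m 0) (m 1) = m := by
  ext k
  fin_cases k <;> rfl

theorem expPair_one_zero : expPair 1 0 = Finsupp.single 0 1 := by
  ext k
  fin_cases k <;> simp [expPair]

section Semiring

variable {R : Type*} [Semiring R] {f : MvPowerSeries (Fin 2) R} {n : ℕ}

theorem forall_coeff_expPair_eq_zero_iff :
    (∀ i j, i + j ≤ n → coeff (expPair i j) f = 0) ↔ (n : ℕ∞) + 1 ≤ f.order := by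
  rw [← Nat.cast_succ, nat_le_order_iff]
  refine ⟨fun h m hm => ?_, fun h i j hij => h _ (by rw [degree_expPair]; omega)⟩
  rw [← expPair_apply_zero_apply_one m]
  exact h _ _ (by rw [← degree_expPair, expPair_apply_zero_apply_one]; omega)

theorem coeff_eq_zero_of_forall_coeff_expPair_zero (hf : ∀ j, j ≤ n → coeff (expPair 0 j) f = 0)
    (m : Fin 2 →₀ ℕ) (hm0 : m 0 = 0) (hm : m.degree < n + 1) : coeff m f = 0 := by
  rw [← expPair_apply_zero_apply_one m, hm0] at hm ⊢
  rw [degree_expPair] at hm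
  exact hf _ (by omega)

end Semiring

/-- Let `p ≥ 1` and let `u, d` be formal power series in two variables `x, y` over `ℝ`
such that the coefficient of `x^0 y^j` in `u` is `0` for every `0 ≤ j ≤ p`, the coefficient
of `x^0 y^j` in `d` is `0` for every `0 ≤ j ≤ p`, and the coefficient of `x^1 y^0` in `d`
is `1`.  Then there exists a unique polynomial `η` in `x, y` over `ℝ` of total degree
strictly less than `p` such that every coefficient of the power series `u − d·η` of total
degree at most `p` vanishes. -/
theorem exists_unique_eta (p : ℕ) (hp : 1 ≤ p)
    (u d : MvPowerSeries (Fin 2) ℝ)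
    (hu : ∀ j : ℕ, j ≤ p → MvPowerSeries.coeff (expPair 0 j) u = 0)
    (hd : ∀ j : ℕ, j ≤ p → MvPowerSeries.coeff (expPair 0 j) d = 0)
    (hd1 : MvPowerSeries.coeff (expPair 1 0) d = 1) :
    ∃! η : MvPolynomial (Fin 2) ℝ, η.totalDegree < p ∧
      ∀ i j : ℕ, i + j ≤ p →
        MvPowerSeries.coeff (expPair i j)
          (u - d * (η : MvPowerSeries (Fin 2) ℝ)) = 0 := by
  obtain ⟨v, hv⟩ :=
    exists_le_order_sub_X_mul (s := 0) (coeff_eq_zero_of_forall_coeff_expPair_zero hu)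
  obtain ⟨e, he⟩ :=
    exists_le_order_sub_X_mul (s := 0) (coeff_eq_zero_of_forall_coeff_expPair_zero hd)
  push_cast at hv he
  have he0 : constantCoeff e = 1 := by
    rw [constantCoeff_eq_of_two_le_order_sub_X_mul (le_trans (by norm_cast; omega) he),
      ← expPair_one_zero, hd1]
  simp_rw [forall_coeff_expPair_eq_zero_iff, le_order_sub_mul_iff hv he (he0 ▸ one_ne_zero),
    totalDegree_lt_and_le_order_sub_iff (by omega : p ≠ 0)]
  exact existsUnique_eq
end

section
/- Let p ≥ 1 be an integer and let u, d : ℕ × ℕ → ℝ be families of real coefficients such that u(0,j) = 0 for all 0 ≤ j ≤ p, d(0,j) = 0 for all 0 ≤ j ≤ p, and d(1,0) = 1. Then there exists a family c : ℕ × ℕ → ℝ with c(m,n) = 0 whenever m + n ≥ p, such that for every pair (i,j) with 1 ≤ i and i + j ≤ p one has u(i,j) = Σ_{m=0}^{i} Σ_{n=0}^{j} d(i−m, j−n) · c(m,n). -/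
/-!
Since `d (0, j) = 0` on the relevant range, the equation at `(k + 1, j)` only involves the
shifted family `e (a, b) = d (a + 1, b)`, whose constant term is `d (1, 0) = 1`. The system
`∑_{y ≤ x} e (x - y) c y = u (x.1 + 1, x.2)` is then unitriangular for the product order on
`ℕ × ℕ` and is solved by well-founded recursion. Truncating `c` to total degree `< p` is
harmless, because the equation at `(k + 1, j)` only reads `c` below `(k, j)`, where `k + j < p`.
-/

open Finset

theorem exists_sum_Iic_mul_eq {α R : Type*} [PartialOrder α] [LocallyFiniteOrderBot α]
    [WellFoundedLT α] [Ring R] (K : α → α → R) (hK : ∀ x, K x x = 1) (U : α → R) :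
    ∃ c : α → R, ∀ x, ∑ y ∈ Iic x, K x y * c y = U x := by
  let c : α → R := wellFounded_lt.fix fun x rec ↦
    U x - ∑ y : Iio x, K x y * rec y (mem_Iio.mp y.2)
  have hc_eq (x : α) : c x = U x - ∑ y ∈ Iio x, K x y * c y := by
    rw [show c x = _ from wellFounded_lt.fix_eq _ x]
    exact congrArg (U x - ·) (sum_coe_sort (Iio x) fun y ↦ K x y * c y)
  refine ⟨c, fun x ↦ ?_⟩
  rw [← add_sum_Iio_eq_sum_Iic, hK, one_mul, hc_eq, sub_add_cancel]

theorem Nat.sum_Iic_pair_eq_sum_range_sum_range {M : Type*} [AddCommMonoid M]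
    (f : ℕ × ℕ → M) (a b : ℕ) :
    ∑ y ∈ Iic (a, b), f y = ∑ m ∈ range (a + 1), ∑ n ∈ range (b + 1), f (m, n) := by
  rw [← Iic_product_Iic, sum_product, Nat.range_succ_eq_Iic, Nat.range_succ_eq_Iic]

theorem exists_coeff_family_general (p : ℕ) (u d : ℕ × ℕ → ℝ)
    (hd : ∀ j : ℕ, j ≤ p → d (0, j) = 0)
    (hd1 : d (1, 0) = 1) :
    ∃ c : ℕ × ℕ → ℝ,
      (∀ m n : ℕ, p ≤ m + n → c (m, n) = 0) ∧
      (∀ i j : ℕ, 1 ≤ i → i + j ≤ p →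
        u (i, j) = ∑ m ∈ Finset.range (i + 1), ∑ n ∈ Finset.range (j + 1),
          d (i - m, j - n) * c (m, n)) := by
  obtain ⟨c, hc⟩ := exists_sum_Iic_mul_eq (fun x y : ℕ × ℕ ↦ d (x.1 - y.1 + 1, x.2 - y.2))
    (fun x ↦ by simpa using hd1) (fun x : ℕ × ℕ ↦ u (x.1 + 1, x.2))
  refine ⟨fun y ↦ if y.1 + y.2 < p then c y else 0, fun m n h ↦ if_neg (by omega), ?_⟩
  rintro (_ | k) j hk hkj
  · omega
  have hlast_row : ∑ n ∈ range (j + 1), d (k + 1 - (k + 1), j - n) *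
      (if k + 1 + n < p then c (k + 1, n) else 0) = 0 :=
    sum_eq_zero fun n _ ↦ by rw [Nat.sub_self, hd _ (by omega), zero_mul]
  rw [sum_range_succ, hlast_row, add_zero, ← hc (k, j), Nat.sum_Iic_pair_eq_sum_range_sum_range]
  refine sum_congr rfl fun m hm ↦ sum_congr rfl fun n hn ↦ ?_
  rw [mem_range] at hm hn
  dsimp only
  rw [if_pos (by omega), Nat.sub_add_comm (by omega)]

/-- Let `p ≥ 1` and let `u, d : ℕ × ℕ → ℝ` be families of real coefficients such that
`u(0,j) = 0` for all `0 ≤ j ≤ p`, `d(0,j) = 0` for all `0 ≤ j ≤ p`, and `d(1,0) = 1`.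
Then there exists a family `c : ℕ × ℕ → ℝ` with `c(m,n) = 0` whenever `m + n ≥ p`,
such that for every pair `(i,j)` with `1 ≤ i` and `i + j ≤ p` one has
`u(i,j) = Σ_{m=0}^{i} Σ_{n=0}^{j} d(i−m, j−n) · c(m,n)`. -/
theorem exists_coeff_family (p : ℕ) (hp : 1 ≤ p) (u d : ℕ × ℕ → ℝ)
    (hu : ∀ j : ℕ, j ≤ p → u (0, j) = 0)
    (hd : ∀ j : ℕ, j ≤ p → d (0, j) = 0)
    (hd1 : d (1, 0) = 1) :
    ∃ c : ℕ × ℕ → ℝ,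
      (∀ m n : ℕ, p ≤ m + n → c (m, n) = 0) ∧
      (∀ i j : ℕ, 1 ≤ i → i + j ≤ p →
        u (i, j) = ∑ m ∈ Finset.range (i + 1), ∑ n ∈ Finset.range (j + 1),
          d (i - m, j - n) * c (m, n)) :=
  exists_coeff_family_general p u d hd hd1
end

section
/- Let p ≥ 1 be an integer and let u, d : ℕ × ℕ → ℝ be families of real coefficients such that d(0,j) = 0 for all 0 ≤ j ≤ p and d(1,0) = 1. If c₁, c₂ : ℕ × ℕ → ℝ both vanish on all pairs (m,n) with m + n ≥ p and both satisfy, for every pair (i,j) with 1 ≤ i and i + j ≤ p, the equation u(i,j) = Σ_{m=0}^{i} Σ_{n=0}^{j} d(i−m, j−n) · c(m,n), then c₁ = c₂. -/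
/-!
Put `e = c₁ - c₂`; the equations say that the Cauchy product `d * e` has vanishing
coefficient of `x^i y^j` whenever `1 ≤ i` and `i + j ≤ p`. Because `d` has no pure
`y`-terms, the coefficient of `x^(m+1) y^n` in `d * e` only involves `e(m', n')` with
`m' < m`, or `m' = m` and `n' ≤ n`, and `e(m, n)` enters with the factor `d(1,0)`. Hence `e`
vanishes by induction in the lexicographic order on `(m, n)`, starting from the known zeros
`e(m, n) = 0` for `m + n ≥ p`.
-/

open Finset

namespace CoeffFamily

variable {R : Type*}

def mulCoeff [Semiring R] (d c : ℕ × ℕ → R) (i j : ℕ) : R :=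
  ∑ m ∈ range (i + 1), ∑ n ∈ range (j + 1), d (i - m, j - n) * c (m, n)

theorem mulCoeff_sub [Ring R] (d c₁ c₂ : ℕ × ℕ → R) (i j : ℕ) :
    mulCoeff d (c₁ - c₂) i j = mulCoeff d c₁ i j - mulCoeff d c₂ i j := by
  simp only [mulCoeff, Pi.sub_apply, mul_sub, sum_sub_distrib]

theorem mulCoeff_succ_eq_of_lex_lt_eq_zero [Semiring R] {d e : ℕ × ℕ → R} {m n : ℕ}
    (hd : ∀ j ≤ n, d (0, j) = 0) (he_row : ∀ m' < m, ∀ n', e (m', n') = 0)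
    (he_col : ∀ n' < n, e (m, n') = 0) :
    mulCoeff d e (m + 1) n = d (1, 0) * e (m, n) := by
  have h_last : ∑ n' ∈ range (n + 1), d (0, n - n') * e (m + 1, n') = 0 :=
    sum_eq_zero fun n' _ => by rw [hd _ (Nat.sub_le n n'), zero_mul]
  have h_diag : ∑ n' ∈ range (n + 1), d (1, n - n') * e (m, n') = d (1, 0) * e (m, n) := by
    rw [sum_range_succ, Nat.sub_self, sum_eq_zero fun n' hn' => by
      rw [he_col n' (mem_range.mp hn'), mul_zero], zero_add]
  have h_below :
      ∑ m' ∈ range m, ∑ n' ∈ range (n + 1), d (m + 1 - m', n - n') * e (m', n') = 0 :=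
    sum_eq_zero fun m' hm' => sum_eq_zero fun n' _ => by
      rw [he_row m' (mem_range.mp hm') n', mul_zero]
  rw [mulCoeff, sum_range_succ, sum_range_succ, Nat.sub_self, Nat.add_sub_cancel_left,
    h_last, h_diag, h_below, zero_add, add_zero]

theorem eq_zero_of_mulCoeff_eq_zero [Semiring R] [NoZeroDivisors R] {d e : ℕ × ℕ → R} {p : ℕ}
    (hd : ∀ j ≤ p, d (0, j) = 0) (hd1 : d (1, 0) ≠ 0)
    (he_high : ∀ m n, p ≤ m + n → e (m, n) = 0)
    (he : ∀ i j, 1 ≤ i → i + j ≤ p → mulCoeff d e i j = 0) :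
    e = 0 := by
  suffices h : ∀ m n, e (m, n) = 0 from funext fun ⟨m, n⟩ => h m n
  intro m
  induction m using Nat.strong_induction_on with
  | _ m ih_row =>
    intro n
    induction n using Nat.strong_induction_on with
    | _ n ih_col =>
      by_cases hmn : p ≤ m + n
      · exact he_high m n hmn
      · have h_eq := mulCoeff_succ_eq_of_lex_lt_eq_zero (fun j hj => hd j (by omega)) ih_row ih_col
        rw [he (m + 1) n le_add_self (by omega)] at h_eq
        exact (mul_eq_zero.mp h_eq.symm).resolve_left hd1

end CoeffFamily

open CoeffFamily in
theorem coeff_family_unique_general (p : ℕ) (u d : ℕ × ℕ → ℝ)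
    (hd : ∀ j : ℕ, j ≤ p → d (0, j) = 0)
    (hd1 : d (1, 0) = 1)
    (c₁ c₂ : ℕ × ℕ → ℝ)
    (hc₁0 : ∀ m n : ℕ, p ≤ m + n → c₁ (m, n) = 0)
    (hc₂0 : ∀ m n : ℕ, p ≤ m + n → c₂ (m, n) = 0)
    (hc₁ : ∀ i j : ℕ, 1 ≤ i → i + j ≤ p →
      u (i, j) = ∑ m ∈ Finset.range (i + 1), ∑ n ∈ Finset.range (j + 1),
        d (i - m, j - n) * c₁ (m, n))
    (hc₂ : ∀ i j : ℕ, 1 ≤ i → i + j ≤ p →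
      u (i, j) = ∑ m ∈ Finset.range (i + 1), ∑ n ∈ Finset.range (j + 1),
        d (i - m, j - n) * c₂ (m, n)) :
    c₁ = c₂ := by
  have h_diff : c₁ - c₂ = 0 := by
    refine eq_zero_of_mulCoeff_eq_zero hd (by rw [hd1]; exact one_ne_zero) ?_ ?_
    · intro m n hmn
      rw [Pi.sub_apply, hc₁0 m n hmn, hc₂0 m n hmn, sub_self]
    · intro i j hi hij
      rw [mulCoeff_sub, mulCoeff, mulCoeff, ← hc₁ i j hi hij, ← hc₂ i j hi hij, sub_self]
  exact sub_eq_zero.mp h_diff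

/-- Let `p ≥ 1` and let `u, d : ℕ × ℕ → ℝ` be families of real coefficients such that
`d(0,j) = 0` for all `0 ≤ j ≤ p` and `d(1,0) = 1`.  If `c₁, c₂ : ℕ × ℕ → ℝ` both vanish
on all pairs `(m,n)` with `m + n ≥ p` and both satisfy, for every pair `(i,j)` with
`1 ≤ i` and `i + j ≤ p`, the equation
`u(i,j) = Σ_{m=0}^{i} Σ_{n=0}^{j} d(i−m, j−n) · c(m,n)`, then `c₁ = c₂`. -/
theorem coeff_family_unique (p : ℕ) (hp : 1 ≤ p) (u d : ℕ × ℕ → ℝ)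
    (hd : ∀ j : ℕ, j ≤ p → d (0, j) = 0)
    (hd1 : d (1, 0) = 1)
    (c₁ c₂ : ℕ × ℕ → ℝ)
    (hc₁0 : ∀ m n : ℕ, p ≤ m + n → c₁ (m, n) = 0)
    (hc₂0 : ∀ m n : ℕ, p ≤ m + n → c₂ (m, n) = 0)
    (hc₁ : ∀ i j : ℕ, 1 ≤ i → i + j ≤ p →
      u (i, j) = ∑ m ∈ Finset.range (i + 1), ∑ n ∈ Finset.range (j + 1),
        d (i - m, j - n) * c₁ (m, n))
    (hc₂ : ∀ i j : ℕ, 1 ≤ i → i + j ≤ p →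
      u (i, j) = ∑ m ∈ Finset.range (i + 1), ∑ n ∈ Finset.range (j + 1),
        d (i - m, j - n) * c₂ (m, n)) :
    c₁ = c₂ :=
  coeff_family_unique_general p u d hd hd1 c₁ c₂ hc₁0 hc₂0 hc₁ hc₂
end

section
/- Let p ≥ 1 be an integer and let d be a formal power series in two variables x, y over ℝ such that the coefficient of x^0 y^j in d is 0 for every 0 ≤ j ≤ p and the coefficient of x^1 y^0 in d is 1. If η is a polynomial in x, y over ℝ of total degree strictly less than p such that every coefficient of the power series d·η of total degree at most p vanishes, then η = 0. -/
open MvPowerSeries Finsupp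

theorem MvPowerSeries.coeff_add_single_mul_of_le_order {σ R : Type*} [Ring R]
    {φ ψ : MvPowerSeries σ R} {i : σ} {e : σ →₀ ℕ}
    (hφ : 2 ≤ (φ - X i).order) (hψ : degree e ≤ ψ.order) :
    coeff (e + single i 1) (φ * ψ) = coeff e ψ := by
  have hX : coeff (e + single i 1) (X i * ψ) = coeff e ψ := by
    rw [add_comm, X, coeff_add_monomial_mul, one_mul]
  have hrest : coeff (e + single i 1) ((φ - X i) * ψ) = 0 := by
    refine coeff_of_lt_order (lt_of_lt_of_le ?_ ((add_le_add hφ hψ).trans le_order_mul))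
    rw [map_add, degree_single]
    norm_cast
    omega
  rw [← add_sub_cancel (X i) φ, add_mul, map_add, hX, hrest, add_zero]

lemma Finsupp.degree_fin_two (a : Fin 2 →₀ ℕ) : degree a = a 0 + a 1 := by
  rw [degree_eq_sum, Fin.sum_univ_two]

lemma eq_expPair (a : Fin 2 →₀ ℕ) : a = expPair (a 0) (a 1) := by
  ext k; fin_cases k <;> rfl

lemma expPair_add_one (i j : ℕ) : expPair (i + 1) j = expPair i j + single 0 1 := by
  ext k; fin_cases k <;> simp [expPair]

lemma coeff_expPair_X_zero {R : Type*} [Semiring R] (i j : ℕ) :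
    coeff (expPair i j) (X 0 : MvPowerSeries (Fin 2) R) = if i = 1 ∧ j = 0 then 1 else 0 := by
  simp [coeff_X, Finsupp.ext_iff, Fin.forall_fin_two, expPair]

lemma two_le_order_sub_X_zero {R : Type*} [Ring R] {d : MvPowerSeries (Fin 2) R}
    (h00 : coeff (expPair 0 0) d = 0) (h01 : coeff (expPair 0 1) d = 0)
    (h10 : coeff (expPair 1 0) d = 1) : 2 ≤ (d - X 0).order := by
  refine nat_le_order fun a ha => ?_
  replace ha : a 0 + a 1 < 2 := by exact_mod_cast degree_fin_two a ▸ ha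
  rw [eq_expPair a, map_sub, coeff_expPair_X_zero]
  obtain ⟨h0, h1⟩ | ⟨h0, h1⟩ | ⟨h0, h1⟩ :
      (a 0 = 0 ∧ a 1 = 0) ∨ (a 0 = 0 ∧ a 1 = 1) ∨ (a 0 = 1 ∧ a 1 = 0) := by omega
  all_goals simp [h0, h1, h00, h01, h10]

theorem eta_eq_zero_of_vanishing_general (p : ℕ)
    (d : MvPowerSeries (Fin 2) ℝ)
    (hd : ∀ j : ℕ, j ≤ p → MvPowerSeries.coeff (expPair 0 j) d = 0)
    (hd1 : MvPowerSeries.coeff (expPair 1 0) d = 1)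
    (η : MvPolynomial (Fin 2) ℝ) (hη : η.totalDegree < p)
    (hvanish : ∀ i j : ℕ, i + j ≤ p →
      MvPowerSeries.coeff (expPair i j) (d * (η : MvPowerSeries (Fin 2) ℝ)) = 0) :
    η = 0 := by
  by_contra hη0
  have hψ : (η : MvPowerSeries (Fin 2) ℝ) ≠ 0 := by rwa [Ne, MvPolynomial.coe_eq_zero_iff]
  obtain ⟨e, he, he_order⟩ := exists_coeff_ne_zero_and_order (ne_zero_iff_order_finite.mp hψ)
  have he_lt : e 0 + e 1 < p := by
    rw [MvPolynomial.coeff_coe] at he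
    rw [← degree_fin_two]
    exact (MvPolynomial.le_totalDegree (MvPolynomial.mem_support_iff.mpr he)).trans_lt hη
  have hd' : 2 ≤ (d - X 0).order := two_le_order_sub_X_zero (hd 0 (by omega)) (hd 1 (by omega)) hd1
  apply he
  rw [← coeff_add_single_mul_of_le_order hd' he_order.le, eq_expPair e, ← expPair_add_one]
  exact hvanish _ _ (by omega)

/-- Let `p ≥ 1` and let `d` be a formal power series in two variables `x, y` over `ℝ`
such that the coefficient of `x^0 y^j` in `d` is `0` for every `0 ≤ j ≤ p` and the
coefficient of `x^1 y^0` in `d` is `1`.  If `η` is a polynomial in `x, y` over `ℝ` of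
total degree strictly less than `p` such that every coefficient of the power series
`d·η` of total degree at most `p` vanishes, then `η = 0`. -/
theorem eta_eq_zero_of_vanishing (p : ℕ) (hp : 1 ≤ p)
    (d : MvPowerSeries (Fin 2) ℝ)
    (hd : ∀ j : ℕ, j ≤ p → MvPowerSeries.coeff (expPair 0 j) d = 0)
    (hd1 : MvPowerSeries.coeff (expPair 1 0) d = 1)
    (η : MvPolynomial (Fin 2) ℝ) (hη : η.totalDegree < p)
    (hvanish : ∀ i j : ℕ, i + j ≤ p →
      MvPowerSeries.coeff (expPair i j) (d * (η : MvPowerSeries (Fin 2) ℝ)) = 0) :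
    η = 0 :=
  eta_eq_zero_of_vanishing_general p d hd hd1 η hη hvanish
end
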